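/- arXiv:1602.06197 — 3 statements merged into one kernel-verified Lean document; each statement's English description precedes it below -/
import Mathlib

section
/- For the Horowitz-Myers geon metric, the function x := 4^{1/n}(r^{n/2} − √(r^n − 1))^{2/n} is a special defining function: in the coordinate x the metric takes Gaussian normal form g = x^{−2}(dx² + h_x) with |dx|²_{x²g} = 1, and h_x = (1 + x^n/4)^{4/n}[((1 − x^n/4)/(1 + x^n/4))² dξ² + ∑_{i=3}^n dφ_i²]. -/
/-!
With `R = r ^ n`, `t = √R`, `s = √(R - 1)` and `u = t - s` one has `t² - s² = 1` and
`xⁿ = 4u²`, so `1 + xⁿ/4 = 2tu` and `1 - xⁿ/4 = 2su`; raising `x²r²` to the `n`-th power then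
gives `(2tu)⁴`, which yields both components of `h_x`. Moreover `u'/u = -R'/(2ts)`, so
`x'/x = -r^{n-1}/(ts)`, which is `|dx|²_{x²g} = 1`.
-/

open Real Set Filter Topology

namespace HorowitzMyers

variable {n : ℕ}

theorem rpow_div_natCast_pow {a : ℝ} (ha : 0 ≤ a) (hn : n ≠ 0) (c : ℝ) :
    (a ^ (c / n)) ^ n = a ^ c := by
  rw [← rpow_natCast, ← rpow_mul ha, div_mul_cancel₀ _ (Nat.cast_ne_zero.2 hn)]

theorem rpow_natCast_div_two {r : ℝ} (hr : 0 ≤ r) : r ^ ((n : ℝ) / 2) = √(r ^ n) := by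
  rw [sqrt_eq_rpow, ← rpow_natCast, ← rpow_mul hr]
  ring_nf

/-- The special defining function as a function of `R = r ^ n`; for `r ≥ 0` it agrees with `x`
since `r ^ (n / 2) = √(r ^ n)` there. -/
noncomputable def profile (n : ℕ) (R : ℝ) : ℝ :=
  4 ^ ((1 : ℝ) / n) * (√R - √(R - 1)) ^ ((2 : ℝ) / n)

theorem sqrt_sub_sqrt_sub_one_nonneg (R : ℝ) : 0 ≤ √R - √(R - 1) :=
  sub_nonneg.2 (sqrt_le_sqrt (by linarith))

theorem profile_nonneg (n : ℕ) (R : ℝ) : 0 ≤ profile n R :=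
  mul_nonneg (by positivity) (rpow_nonneg (sqrt_sub_sqrt_sub_one_nonneg R) _)

theorem sqrt_sub_sqrt_sub_one_pos {R : ℝ} (hR : 1 ≤ R) : 0 < √R - √(R - 1) := by
  have := sqrt_lt_sqrt (by linarith) (show R - 1 < R by linarith)
  linarith

theorem profile_pow (hn : n ≠ 0) (R : ℝ) : profile n R ^ n = 4 * (√R - √(R - 1)) ^ 2 := by
  rw [profile, mul_pow, rpow_div_natCast_pow (by norm_num) hn,
    rpow_div_natCast_pow (sqrt_sub_sqrt_sub_one_nonneg R) hn,
    rpow_one, rpow_two]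

theorem one_add_profile_pow_div_four (hn : n ≠ 0) {R : ℝ} (hR : 1 ≤ R) :
    1 + profile n R ^ n / 4 = 2 * √R * (√R - √(R - 1)) := by
  rw [profile_pow hn]
  nlinarith [sq_sqrt (show 0 ≤ R by linarith), sq_sqrt (show 0 ≤ R - 1 by linarith)]

theorem one_sub_profile_pow_div_four (hn : n ≠ 0) {R : ℝ} (hR : 1 ≤ R) :
    1 - profile n R ^ n / 4 = 2 * √(R - 1) * (√R - √(R - 1)) := by
  rw [profile_pow hn]
  nlinarith [sq_sqrt (show 0 ≤ R by linarith), sq_sqrt (show 0 ≤ R - 1 by linarith)]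

theorem hasDerivAt_profile {R : ℝ} (hR : 1 < R) :
    HasDerivAt (profile n) (-profile n R / (n * √R * √(R - 1))) R := by
  have hu := sqrt_sub_sqrt_sub_one_pos hR.le
  have hb : 0 < √(R - 1) := sqrt_pos.2 (by linarith)
  have hdiff : HasDerivAt (fun R => √R - √(R - 1)) (1 / (2 * √R) - 1 / (2 * √(R - 1))) R := by
    have hsqrt : HasDerivAt (fun R => √(R - 1)) (1 / (2 * √(R - 1))) R := by
      simpa using ((hasDerivAt_id R).sub_const 1).sqrt (by simp; linarith)
    exact (hasDerivAt_sqrt (by linarith)).sub hsqrt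
  refine ((hdiff.rpow_const (p := 2 / n) (Or.inl hu.ne')).const_mul
    (4 ^ ((1 : ℝ) / n))).congr_deriv ?_
  rw [profile, rpow_sub_one hu.ne']
  field_simp
  ring

theorem sq_one_sub_div_one_add_profile_pow (hn : n ≠ 0) {R : ℝ} (hR : 1 ≤ R) :
    ((1 - profile n R ^ n / 4) / (1 + profile n R ^ n / 4)) ^ 2 = 1 - R⁻¹ := by
  have hu := sqrt_sub_sqrt_sub_one_pos hR
  rw [one_sub_profile_pow_div_four hn hR, one_add_profile_pow_div_four hn hR, div_pow,
    mul_pow, mul_pow, mul_pow, mul_pow, sq_sqrt (by linarith), sq_sqrt (by linarith)]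
  field_simp

theorem profile_pow_sq_mul_sq (hn : n ≠ 0) {r : ℝ} (hr : 1 ≤ r) :
    profile n (r ^ n) ^ 2 * r ^ 2 = (1 + profile n (r ^ n) ^ n / 4) ^ ((4 : ℝ) / n) := by
  have hR : 1 ≤ r ^ n := one_le_pow₀ hr
  have hu := sqrt_sub_sqrt_sub_one_pos hR
  rw [one_add_profile_pow_div_four hn hR]
  refine (pow_left_inj₀ (by positivity) (rpow_nonneg (by positivity) _) hn).1 ?_
  rw [rpow_div_natCast_pow (by positivity) hn, mul_pow, ← pow_mul, ← pow_mul, mul_comm 2 n,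
    pow_mul, pow_mul, profile_pow hn]
  norm_cast
  linear_combination (-16 * (√(r ^ n) - √(r ^ n - 1)) ^ 4 * (r ^ n + √(r ^ n) ^ 2)) *
    sq_sqrt (show 0 ≤ r ^ n by linarith)

theorem hasDerivAt_profile_comp_pow (hn : n ≠ 0) {r : ℝ} (hr : 1 < r) :
    HasDerivAt (fun r => profile n (r ^ n))
      (-profile n (r ^ n) * r ^ (n - 1) / (√(r ^ n) * √(r ^ n - 1))) r := by
  refine ((hasDerivAt_profile (one_lt_pow₀ hr hn)).comp r (hasDerivAt_pow n r)).congr_deriv ?_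
  field_simp

theorem deriv_profile_comp_pow_sq_mul (hn : n ≠ 0) {r : ℝ} (hr : 1 < r) :
    deriv (fun r => profile n (r ^ n)) r ^ 2 * (r ^ 2 * (1 - (r ^ n)⁻¹)) =
      profile n (r ^ n) ^ 2 := by
  have hR : 1 < r ^ n := one_lt_pow₀ hr hn
  have hr' : r ^ (n - 1) * r = r ^ n := pow_sub_one_mul hn r
  rw [(hasDerivAt_profile_comp_pow hn hr).deriv, div_pow, mul_pow, mul_pow, neg_sq,
    sq_sqrt (by linarith), sq_sqrt (by linarith)]
  have hR1 : r ^ n - 1 ≠ 0 := by linarith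
  field_simp
  rw [← hr']
  ring

end HorowitzMyers

open HorowitzMyers in
/-- For the Horowitz-Myers geon metric
`g = dr²/(r²(1−r^{−n})) + r²((1−r^{−n})dξ² + ∑ dφ_i²)`, the function
`x := 4^{1/n}(r^{n/2} − √(r^n − 1))^{2/n}` is a special defining function:
`|dx|²_{x²g} = 1`, i.e. `(dx/dr)² · r²(1−r^{−n}) = x²`, and in the coordinate `x`
the metric takes the Gaussian normal form `g = x^{−2}(dx² + h_x)` with
`h_x = (1 + x^n/4)^{4/n}[((1 − x^n/4)/(1 + x^n/4))² dξ² + ∑ dφ_i²]`, i.e. the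
`ξξ`-component `x²·r²(1−r^{−n})` and the `φφ`-components `x²·r²` of `h_x = x²·(angular
part of g)` are given by the stated formulas. -/
theorem horowitz_myers_special_defining_function
    (n : ℕ) (hn : 3 ≤ n)
    (X : ℝ → ℝ)
    (hX : ∀ r : ℝ, X r =
      (4 : ℝ) ^ ((1 : ℝ) / n) * (r ^ ((n : ℝ) / 2) - Real.sqrt (r ^ n - 1)) ^ ((2 : ℝ) / n)) :
    ∀ r : ℝ, 1 < r →
      ((deriv X r) ^ 2 * (r ^ 2 * (1 - (r ^ n)⁻¹)) = (X r) ^ 2) ∧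
      ((X r) ^ 2 * r ^ 2 = (1 + (X r) ^ n / 4) ^ ((4 : ℝ) / n)) ∧
      ((X r) ^ 2 * (r ^ 2 * (1 - (r ^ n)⁻¹)) =
        (1 + (X r) ^ n / 4) ^ ((4 : ℝ) / n) *
          ((1 - (X r) ^ n / 4) / (1 + (X r) ^ n / 4)) ^ 2) := by
  intro r hr
  have hn0 : n ≠ 0 := by omega
  have hXeq : X =ᶠ[𝓝 r] fun r => profile n (r ^ n) := by
    filter_upwards [lt_mem_nhds (zero_lt_one.trans hr)] with r' hr'
    rw [hX, rpow_natCast_div_two hr'.le, profile]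
  rw [hXeq.deriv_eq, hXeq.eq_of_nhds]
  refine ⟨deriv_profile_comp_pow_sq_mul hn0 hr, profile_pow_sq_mul_sq hn0 hr.le, ?_⟩
  rw [sq_one_sub_div_one_add_profile_pow hn0 (one_le_pow₀ hr.le),
    ← profile_pow_sq_mul_sq hn0 hr.le]
  ring
end

section
/- Expanding the Horowitz-Myers geon metric in its special defining function x yields θ = 0 and κ = −(n−1)dξ² + ∑_{i=3}^n dφ_i², so the mass aspect is tr_δ κ = −1. -/
/-!
Put `u = x^n/4` and `a = 4/n`. The `φ`-components of the geon metric are `(1+u)^a` and the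
`ξ`-component is `(1+u)^a ((1-u)/(1+u))^2`; to first order these are `1 + a u = 1 + x^n/n` and
`1 + (a-4) u = 1 - (n-1) x^n/n`, which gives `θ = 0` and the stated `κ`, with trace
`-(n-1) + (n-2) = -1`. The remainders are `O(u^2) = O(x^{2n})`, hence `O(x^{n+1})`; the `O(u^2)`
bound follows from the mean value theorem, since the derivative of each remainder is `O(u)`.
-/

open Real Filter Asymptotics Set
open scoped Topology

lemma isBigO_sq_of_hasDerivAt {E : Type*} [NormedAddCommGroup E] [NormedSpace ℝ E]
    {G D : ℝ → E} (hG0 : G 0 = 0) (hG : ∀ᶠ t in 𝓝 (0 : ℝ), HasDerivAt G (D t) t)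
    (hD : D =O[𝓝 (0 : ℝ)] fun t => t) :
    G =O[𝓝 (0 : ℝ)] fun u => u ^ 2 := by
  obtain ⟨C, hC0, hC⟩ := hD.exists_nonneg
  obtain ⟨δ, hδ, hball⟩ := Metric.eventually_nhds_iff_ball.1 (hG.and hC.bound)
  refine isBigO_iff.2 ⟨C, ?_⟩
  filter_upwards [Metric.ball_mem_nhds (0 : ℝ) hδ] with u hu
  have hsub : Icc (-|u|) |u| ⊆ Metric.ball 0 δ := fun t ht => by
    rw [mem_ball_zero_iff, Real.norm_eq_abs]
    exact (abs_le.2 ht).trans_lt (by simpa using hu)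
  have hmvt := (convex_Icc (-|u|) |u|).norm_image_sub_le_of_norm_hasDerivWithin_le
    (fun t ht => (hball t (hsub ht)).1.hasDerivWithinAt)
    (fun t ht => (hball t (hsub ht)).2.trans
      (mul_le_mul_of_nonneg_left (abs_le.2 ht) hC0))
    ⟨neg_nonpos.2 (abs_nonneg u), abs_nonneg u⟩ ⟨neg_abs_le u, le_abs_self u⟩
  calc ‖G u‖ = ‖G u - G 0‖ := by rw [hG0, sub_zero]
    _ ≤ C * |u| * ‖u - 0‖ := hmvt
    _ = C * ‖u ^ 2‖ := by rw [sub_zero, norm_pow, Real.norm_eq_abs, mul_assoc, sq]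

lemma one_add_rpow_sub_one_sub_mul_isBigO (a : ℝ) :
    (fun u : ℝ => (1 + u) ^ a - 1 - a * u) =O[𝓝 0] fun u => u ^ 2 := by
  have hderiv : ∀ᶠ t in 𝓝 (0 : ℝ),
      HasDerivAt (fun u : ℝ => (1 + u) ^ a - 1 - a * u) (a * ((1 + t) ^ (a - 1) - 1)) t := by
    filter_upwards [Ioi_mem_nhds (show (-1 : ℝ) < 0 by norm_num)] with t ht
    have hbase := ((hasDerivAt_id' t).const_add 1).rpow_const (p := a)
      (Or.inl (by rw [mem_Ioi] at ht; linarith))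
    exact ((hbase.sub_const 1).sub ((hasDerivAt_id' t).const_mul a)).congr_deriv (by ring)
  have hD : (fun t : ℝ => a * ((1 + t) ^ (a - 1) - 1)) =O[𝓝 0] fun t => t := by
    have hdiff : DifferentiableAt ℝ (fun t : ℝ => a * ((1 + t) ^ (a - 1) - 1)) 0 :=
      (((differentiableAt_id.const_add 1).rpow_const (Or.inl (by norm_num))).sub_const 1).const_mul
        a
    simpa using hdiff.isBigO_sub
  exact isBigO_sq_of_hasDerivAt (by simp) hderiv hD

lemma one_add_rpow_mul_div_sq_sub_isBigO (a : ℝ) :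
    (fun u : ℝ => (1 + u) ^ a * ((1 - u) / (1 + u)) ^ 2 - 1 - (a - 4) * u)
      =O[𝓝 0] fun u => u ^ 2 := by
  -- For `1 + u ≠ 0` the left side is
  -- `(((1+u)^a - 1 - a u) (1-u)^2 + u^2 (8 - 4a + 4u)) / (1+u)^2`.
  have hbounded (p : ℝ → ℝ) (hp : Continuous p) :
      (fun u : ℝ => p u / (1 + u) ^ 2) =O[𝓝 0] fun _ => (1 : ℝ) :=
    ((hp.tendsto 0).div ((continuous_const.add continuous_id).pow 2 |>.tendsto 0)
      (by norm_num)).isBigO_one ℝ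
  have hsplit := ((one_add_rpow_sub_one_sub_mul_isBigO a).mul
      (hbounded (fun u => (1 - u) ^ 2) (by fun_prop))).add
    ((isBigO_refl (fun u : ℝ => u ^ 2) _).mul
      (hbounded (fun u => 8 - 4 * a + 4 * u) (by fun_prop)))
  simp only [mul_one] at hsplit
  refine hsplit.congr' ?_ EventuallyEq.rfl
  filter_upwards [Ioi_mem_nhds (show (-1 : ℝ) < 0 by norm_num)] with u hu
  have hu' : 1 + u ≠ 0 := by rw [mem_Ioi] at hu; linarith
  field_simp
  ring

lemma Asymptotics.IsBigO.comp_pow_div {E : Type*} [NormedAddCommGroup E] {G : ℝ → E}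
    (hG : G =O[𝓝 0] fun u => u ^ 2) {n : ℕ} (hn : 1 ≤ n) (c : ℝ) :
    (fun x : ℝ => G (x ^ n / c)) =O[𝓝 0] fun x => x ^ (n + 1) := by
  have htendsto : Tendsto (fun x : ℝ => x ^ n / c) (𝓝 0) (𝓝 0) := by
    simpa [zero_pow (by omega : n ≠ 0)] using ((continuous_pow n).div_const c).tendsto 0
  have hsq : (fun x : ℝ => (x ^ n / c) ^ 2) =O[𝓝 0] fun x => x ^ (2 * n) := by
    refine (isBigO_const_mul_self ((c ^ 2)⁻¹) (fun x : ℝ => x ^ (2 * n)) (𝓝 0)).congr_left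
      fun x => ?_
    rw [div_pow, ← pow_mul, mul_comm n 2, div_eq_inv_mul]
  have hpow : (fun x : ℝ => x ^ (2 * n)) =O[𝓝 0] fun x => x ^ (n + 1) := by
    rcases hn.eq_or_lt with rfl | hlt
    · exact isBigO_refl _ _
    · exact (isLittleO_pow_pow (by omega)).isBigO
  exact ((hG.comp_tendsto htendsto).trans hsq).trans hpow

lemma Fin.sum_ite_val_eq_zero {M : Type*} [AddCommMonoid M] {m : ℕ} [NeZero m] (a b : M) :
    ∑ i : Fin m, (if (i : ℕ) = 0 then a else b) = a + (m - 1) • b := by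
  rw [← Finset.add_sum_erase _ _ (Finset.mem_univ 0), Fin.val_zero, if_pos rfl,
    Finset.sum_congr rfl fun i hi => if_neg (Fin.val_ne_zero_iff.2 (Finset.ne_of_mem_erase hi)),
    Finset.sum_const, Finset.card_erase_of_mem (Finset.mem_univ 0), Finset.card_univ,
    Fintype.card_fin]

/-- Expanding the Horowitz-Myers geon metric
`h_x = (1+x^n/4)^{4/n}[((1−x^n/4)/(1+x^n/4))² dξ² + ∑ dφ_i²]`
in its special defining function `x` as
`h_x = δ + (x^{n−1}/(n−1))θ + (x^n/n)κ + O(x^{n+1})`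
yields `θ = 0` and `κ = −(n−1)dξ² + ∑ dφ_i²`, so the mass aspect is `tr_δ κ = −1`.
(The index `0` of `Fin (n-1)` is the `ξ`-direction, the others are the `φ_i`.) -/
theorem horowitz_myers_geon_expansion
    (n : ℕ) (hn : 3 ≤ n)
    (h : ℝ → Fin (n - 1) → Fin (n - 1) → ℝ)
    (hdef : ∀ x i j, h x i j =
      if i = j then
        (if (i : ℕ) = 0 then
          (1 + x ^ n / 4) ^ ((4 : ℝ) / n) * ((1 - x ^ n / 4) / (1 + x ^ n / 4)) ^ 2
        else (1 + x ^ n / 4) ^ ((4 : ℝ) / n))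
      else 0)
    (θ κ : Fin (n - 1) → Fin (n - 1) → ℝ)
    (hθ : θ = 0)
    (hκ : ∀ i j, κ i j =
      if i = j then (if (i : ℕ) = 0 then -((n : ℝ) - 1) else 1) else 0) :
    (∀ i j, (fun x : ℝ => h x i j -
        ((if i = j then (1 : ℝ) else 0) + x ^ (n - 1) / ((n : ℝ) - 1) * θ i j
          + x ^ n / (n : ℝ) * κ i j))
        =O[𝓝[>] (0 : ℝ)] fun x => x ^ (n + 1)) ∧
    (∑ i, κ i i = -1) := by
  have hn0 : (n : ℝ) ≠ 0 := Nat.cast_ne_zero.2 (by omega)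
  subst hθ
  refine ⟨fun i j => ?_, ?_⟩
  · simp only [hdef, hκ, Pi.zero_apply, mul_zero, add_zero]
    split_ifs with hij hi0
    · refine (((one_add_rpow_mul_div_sq_sub_isBigO (4 / n)).comp_pow_div (by omega) 4).mono
        nhdsWithin_le_nhds).congr_left fun x => ?_
      field_simp
      ring
    · refine (((one_add_rpow_sub_one_sub_mul_isBigO (4 / n)).comp_pow_div (by omega) 4).mono
        nhdsWithin_le_nhds).congr_left fun x => ?_
      field_simp
      ring
    · simpa using isBigO_zero _ _
  · have : NeZero (n - 1) := ⟨by omega⟩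
    simp only [hκ, if_true]
    rw [Fin.sum_ite_val_eq_zero, nsmul_eq_mul, Nat.cast_sub (by omega), Nat.cast_sub (by omega)]
    push_cast
    ring
end

section
/- For a static solution in Fermat compactification, the second fundamental forms of constant-x hypersurfaces with respect to the compactified metrics ĝ := x²g and g̃ := g/N² satisfy K̂_x = −κx^{n−1} + O(x^n) and K̃_x = K̂_x − μδx^{n−1} + O(x^n) = −(κ + μδ)x^{n−1} + O(x^n), with mean curvature H̃_x = −nμx^{n−1} + O(x^n), where μ = tr_δ κ. -/
open Real Filter Asymptotics Set Matrix
open scoped Topology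

private lemma aux_mem_Ioo : ∀ᶠ x in 𝓝[>] (0:ℝ), x ∈ Ioo (0:ℝ) 1 :=
  Ioo_mem_nhdsGT_of_mem ⟨le_rfl, one_pos⟩

private lemma aux_pow_le {a b : ℕ} (h : b ≤ a) :
    (fun x : ℝ => x ^ a) =O[𝓝[>] (0:ℝ)] fun x => x ^ b := by
  rw [Asymptotics.isBigO_iff]
  refine ⟨1, ?_⟩
  filter_upwards [aux_mem_Ioo] with x hx
  rw [one_mul, Real.norm_eq_abs, Real.norm_eq_abs, abs_pow, abs_pow]
  exact pow_le_pow_of_le_one (abs_nonneg x) (by rw [abs_of_pos hx.1]; exact hx.2.le) h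

private lemma aux_taylor (m : ℕ) (g : ℝ → ℝ) (hg : ContDiffOn ℝ (m + 1) g (Icc 0 1))
    (h0 : ∀ k ≤ m, iteratedDerivWithin k g (Icc 0 1) 0 = 0) :
    g =O[𝓝[>] (0:ℝ)] fun x => x ^ (m + 1) := by
  obtain ⟨C, hC⟩ := exists_taylor_mean_remainder_bound zero_le_one hg
  have hT : ∀ x : ℝ, taylorWithinEval g m (Icc 0 1) 0 x = 0 := by
    intro x
    rw [taylor_within_apply]
    apply Finset.sum_eq_zero
    intro k hk
    rw [h0 k (Nat.lt_succ_iff.mp (Finset.mem_range.mp hk))]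
    simp
  rw [Asymptotics.isBigO_iff]
  refine ⟨C, ?_⟩
  filter_upwards [aux_mem_Ioo] with x hx
  have h := hC x ⟨hx.1.le, hx.2.le⟩
  rw [hT x, sub_zero, sub_zero] at h
  calc ‖g x‖ ≤ C * x ^ (m + 1) := h
    _ = C * ‖x ^ (m + 1)‖ := by
        rw [Real.norm_eq_abs, abs_pow, abs_of_pos hx.1]

private lemma aux_deriv (m : ℕ) (g : ℝ → ℝ) (hg : ContDiffOn ℝ (m + 2 : ℕ) g (Icc 0 1))
    (h0 : ∀ k ≤ m + 1, iteratedDerivWithin k g (Icc 0 1) 0 = 0) :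
    deriv g =O[𝓝[>] (0:ℝ)] fun x => x ^ (m + 1) := by
  have hu : UniqueDiffOn ℝ (Icc (0:ℝ) 1) := uniqueDiffOn_Icc one_pos
  have hg' : ContDiffOn ℝ (m + 1 : ℕ) (derivWithin g (Icc 0 1)) (Icc 0 1) :=
    hg.derivWithin hu (by norm_cast)
  have h0' : ∀ k ≤ m, iteratedDerivWithin k (derivWithin g (Icc 0 1)) (Icc 0 1) 0 = 0 := by
    intro k hk
    rw [← iteratedDerivWithin_succ']
    exact h0 (k + 1) (by omega)
  have hO := aux_taylor m _ hg' h0'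
  refine hO.congr' ?_ EventuallyEq.rfl
  filter_upwards [aux_mem_Ioo] with x hx
  exact derivWithin_of_mem_nhds (Icc_mem_nhds hx.1 hx.2)

private lemma scalar_exp (n : ℕ) (hn : 3 ≤ n) (h : ℝ → ℝ) (c0 c : ℝ)
    (hs : ContDiffOn ℝ (⊤ : ℕ∞) h (Icc 0 1))
    (hv : ∀ k ≤ n, iteratedDerivWithin k
      (fun x => h x - (c0 + c / (n : ℝ) * x ^ n)) (Icc 0 1) 0 = 0) :
    ((fun x => h x - c0) =O[𝓝[>] (0:ℝ)] fun x => x ^ n) ∧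
    ((fun x => deriv h x - c * x ^ (n - 1)) =O[𝓝[>] (0:ℝ)] fun x => x ^ n) ∧
    (∀ᶠ x in 𝓝[>] (0:ℝ), DifferentiableAt ℝ h x) := by
  have hnR : (n : ℝ) ≠ 0 := Nat.cast_ne_zero.mpr (by omega)
  have hP : ∀ x : ℝ, HasDerivAt (fun y : ℝ => c0 + c / (n:ℝ) * y ^ n) (c * x ^ (n-1)) x := by
    intro x
    have h1 := ((hasDerivAt_pow n x).const_mul (c / (n:ℝ))).const_add c0
    refine h1.congr_deriv ?_
    field_simp
  have hPc : ContDiff ℝ (⊤ : ℕ∞) (fun y : ℝ => c0 + c / (n:ℝ) * y ^ n) := by fun_prop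
  set g : ℝ → ℝ := fun x => h x - (c0 + c / (n:ℝ) * x ^ n) with hgdef
  have hgc : ContDiffOn ℝ (⊤ : ℕ∞) g (Icc 0 1) := hs.sub hPc.contDiffOn
  have hdiff : ∀ᶠ x in 𝓝[>] (0:ℝ), DifferentiableAt ℝ h x := by
    filter_upwards [aux_mem_Ioo] with x hx
    exact ((hs.differentiableOn (by simp)) x (Ioo_subset_Icc_self hx)).differentiableAt
      (Icc_mem_nhds hx.1 hx.2)
  have hg1 : g =O[𝓝[>] (0:ℝ)] fun x => x ^ (n + 1) := by
    have := aux_taylor n g (hgc.of_le (by exact_mod_cast le_top)) hv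
    rwa [show n + 1 = n + 1 from rfl] at this
  have hgd : deriv g =O[𝓝[>] (0:ℝ)] fun x => x ^ n := by
    have h2 := aux_deriv (n - 1) g (hgc.of_le (by exact WithTop.coe_le_coe.mpr le_top)) (by
      intro k hk; exact hv k (by omega))
    rwa [show n - 1 + 1 = n by omega] at h2
  refine ⟨?_, ?_, hdiff⟩
  · have h1 : (fun x : ℝ => c / (n:ℝ) * x ^ n) =O[𝓝[>] (0:ℝ)] fun x => x ^ n :=
      (isBigO_refl _ _).const_mul_left _
    have := (hg1.trans (aux_pow_le (Nat.le_succ n))).add h1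
    exact this.congr_left fun x => by simp [hgdef]; ring
  · refine hgd.congr' ?_ EventuallyEq.rfl
    filter_upwards [hdiff] with x hx
    have : deriv g x = deriv h x - c * x ^ (n - 1) := by
      rw [hgdef]
      rw [deriv_fun_sub hx (hP x).differentiableAt, (hP x).deriv]
    rw [this]
/-- For a static solution `(M,g,N)` with flat toroidal conformal infinity and zero
Neumann data, let `ĝ = dx² + Hₓ` with `Hₓ = δ + (κ/n)xⁿ + O(x^{n+1})` be the
Fefferman-Graham compactification and `g̃ = ĝ/(xN)² = F(x)²ĝ` with
`F = (1 − (μ/(2n))xⁿ)⁻¹` the Fermat compactification, `μ = tr_δ κ`.  The second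
fundamental forms (Lie-derivative normalization) of the constant-`x` hypersurfaces
are `K̂ₓ = −∂ₓHₓ` for `ĝ` and `K̃ₓ = −(1/F)∂ₓ(F²Hₓ)` for `g̃`, and they satisfy
`K̂ₓ = −κx^{n−1} + O(xⁿ)`,
`K̃ₓ = K̂ₓ − μδx^{n−1} + O(xⁿ) = −(κ + μδ)x^{n−1} + O(xⁿ)`,
with mean curvature `H̃ₓ = tr_{F²Hₓ}K̃ₓ = −nμx^{n−1} + O(xⁿ)`. -/
theorem fermat_second_fundamental_form_expansions
    (n : ℕ) (hn : 3 ≤ n)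
    (H : ℝ → Matrix (Fin (n - 1)) (Fin (n - 1)) ℝ)
    (κ : Matrix (Fin (n - 1)) (Fin (n - 1)) ℝ)
    (μ : ℝ) (hμ : μ = Matrix.trace κ)
    (hsmooth : ∀ i j, ContDiffOn ℝ (⊤ : ℕ∞) (fun x => H x i j) (Icc 0 1))
    -- `Hₓ = δ + (κ/n)xⁿ + O(x^{n+1})`
    (hexp : ∀ i j, ∀ k ≤ n, iteratedDerivWithin k
        (fun x => H x i j - ((1 : Matrix (Fin (n - 1)) (Fin (n - 1)) ℝ) i j
          + κ i j / (n : ℝ) * x ^ n))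
        (Icc 0 1) 0 = 0)
    (F : ℝ → ℝ) (hF : ∀ x, F x = (1 - μ / (2 * n) * x ^ n)⁻¹)
    (Khat Ktil : ℝ → Matrix (Fin (n - 1)) (Fin (n - 1)) ℝ)
    (hKhat : ∀ x i j, Khat x i j = -deriv (fun t => H t i j) x)
    (hKtil : ∀ x i j, Ktil x i j =
      -(1 / F x) * deriv (fun t => (F t) ^ 2 * H t i j) x) :
    -- `K̂ₓ = −κx^{n−1} + O(xⁿ)`
    (∀ i j, (fun x : ℝ => Khat x i j + κ i j * x ^ (n - 1))
      =O[𝓝[>] (0 : ℝ)] fun x => x ^ n) ∧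
    -- `K̃ₓ = K̂ₓ − μδx^{n−1} + O(xⁿ)`
    (∀ i j, (fun x : ℝ => Ktil x i j -
        (Khat x i j - μ * (if i = j then (1 : ℝ) else 0) * x ^ (n - 1)))
      =O[𝓝[>] (0 : ℝ)] fun x => x ^ n) ∧
    -- `K̃ₓ = −(κ + μδ)x^{n−1} + O(xⁿ)`
    (∀ i j, (fun x : ℝ => Ktil x i j +
        (κ i j + μ * (if i = j then (1 : ℝ) else 0)) * x ^ (n - 1))
      =O[𝓝[>] (0 : ℝ)] fun x => x ^ n) ∧
    -- mean curvature `H̃ₓ = −nμx^{n−1} + O(xⁿ)`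
    ((fun x : ℝ => Matrix.trace ((((F x) ^ 2) • H x)⁻¹ * Ktil x) + (n : ℝ) * μ * x ^ (n - 1))
      =O[𝓝[>] (0 : ℝ)] fun x => x ^ n) := by
  have hn1 : 1 ≤ n := by omega
  have hnR : (n : ℝ) ≠ 0 := Nat.cast_ne_zero.mpr (by omega)
  have key : ∀ i j, _ := fun i j =>
    scalar_exp n hn (fun x => H x i j) ((1 : Matrix (Fin (n - 1)) (Fin (n - 1)) ℝ) i j)
      (κ i j) (hsmooth i j) (hexp i j)
  -- Claim 1
  have claim1 : ∀ i j, (fun x : ℝ => Khat x i j + κ i j * x ^ (n - 1))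
      =O[𝓝[>] (0 : ℝ)] fun x => x ^ n := by
    intro i j
    refine ((key i j).2.1).neg_left.congr_left fun x => ?_
    rw [hKhat x i j]; ring
  -- derivative of H is O(x^(n-1))
  have hderivO : ∀ i j, (fun x : ℝ => deriv (fun t => H t i j) x)
      =O[𝓝[>] (0 : ℝ)] fun x => x ^ (n - 1) := by
    intro i j
    have h3 : (fun x : ℝ => κ i j * x ^ (n - 1)) =O[𝓝[>] (0:ℝ)] fun x => x ^ (n - 1) :=
      (isBigO_refl _ _).const_mul_left _
    have := ((key i j).2.1.trans (aux_pow_le (by omega : n - 1 ≤ n))).add h3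
    exact this.congr_left fun x => by ring
  have hHsub : ∀ i j, (fun x : ℝ => H x i j - (1 : Matrix (Fin (n - 1)) (Fin (n - 1)) ℝ) i j)
      =O[𝓝[>] (0 : ℝ)] fun x => x ^ n := fun i j => (key i j).1
  have hpow0 : ∀ m : ℕ, (fun x : ℝ => x ^ m) =O[𝓝[>] (0:ℝ)] fun _ => (1:ℝ) := fun m =>
    (aux_pow_le (Nat.zero_le m)).congr_right fun x => pow_zero x
  have hHO : ∀ i j, (fun x : ℝ => H x i j) =O[𝓝[>] (0:ℝ)] fun _ => (1:ℝ) := by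
    intro i j
    have := ((hHsub i j).trans (hpow0 n)).add
      (isBigO_const_const ((1 : Matrix (Fin (n - 1)) (Fin (n - 1)) ℝ) i j) one_ne_zero _)
    exact this.congr_left fun x => by ring
  -- F facts
  set a : ℝ := μ / (2 * n) with ha
  have htend_den : Tendsto (fun x : ℝ => 1 - a * x ^ n) (𝓝[>] (0:ℝ)) (𝓝 1) := by
    have hc : Continuous fun x : ℝ => 1 - a * x ^ n := by fun_prop
    have h0 : Tendsto (fun x : ℝ => 1 - a * x ^ n) (𝓝[>] (0:ℝ)) (𝓝 (1 - a * 0 ^ n)) :=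
      (hc.tendsto 0).mono_left nhdsWithin_le_nhds
    simpa [zero_pow (by omega : n ≠ 0)] using h0
  have hden_ne : ∀ᶠ x in 𝓝[>] (0:ℝ), 1 - a * x ^ n ≠ 0 :=
    htend_den.eventually_ne one_ne_zero
  have htendF : Tendsto F (𝓝[>] (0:ℝ)) (𝓝 1) := by
    have := htend_den.inv₀ one_ne_zero
    rw [inv_one] at this
    exact this.congr fun x => (hF x).symm
  have hFO : F =O[𝓝[>] (0:ℝ)] fun _ => (1:ℝ) := htendF.isBigO_one ℝ
  have hFsub : (fun x => F x - 1) =O[𝓝[>] (0:ℝ)] fun x => x ^ n := by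
    have he : ∀ᶠ x in 𝓝[>] (0:ℝ), F x * (a * x ^ n) = F x - 1 := by
      filter_upwards [hden_ne] with x hx
      rw [hF x]; field_simp; ring
    have h1 : (fun x : ℝ => a * x ^ n) =O[𝓝[>] (0:ℝ)] fun x => x ^ n :=
      (isBigO_refl _ _).const_mul_left _
    exact ((hFO.mul h1).congr_right fun x => one_mul _).congr' he EventuallyEq.rfl
  have hF2sub : (fun x => F x ^ 2 - 1) =O[𝓝[>] (0:ℝ)] fun x => x ^ n := by
    have hFp1 : (fun x => F x + 1) =O[𝓝[>] (0:ℝ)] fun _ => (1:ℝ) :=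
      (htendF.add tendsto_const_nhds).isBigO_one ℝ
    have := hFsub.mul hFp1
    refine (this.congr_left fun x => by ring).congr_right fun x => mul_one _
  have hAsub : ∀ i j, (fun x => F x ^ 2 * H x i j
      - (1 : Matrix (Fin (n - 1)) (Fin (n - 1)) ℝ) i j) =O[𝓝[>] (0:ℝ)] fun x => x ^ n := by
    intro i j
    have h1 := (hF2sub.mul (hHO i j)).congr_right fun x => mul_one _
    exact (h1.add (hHsub i j)).congr_left fun x => by ring
  -- derivative of F
  have hFder : ∀ᶠ x in 𝓝[>] (0:ℝ),
      HasDerivAt F ((a * n * x ^ (n - 1)) * F x ^ 2) x := by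
    filter_upwards [hden_ne] with x hx
    have hden : HasDerivAt (fun y : ℝ => 1 - a * y ^ n) (-(a * ((n:ℝ) * x ^ (n - 1)))) x := by
      simpa using ((hasDerivAt_pow n x).const_mul a).const_sub 1
    have h2 : HasDerivAt (fun y : ℝ => (1 - a * y ^ n)⁻¹)
        ((a * n * x ^ (n - 1)) * ((1 - a * x ^ n)⁻¹) ^ 2) x := by
      have := hden.fun_inv hx
      refine this.congr_deriv ?_
      rw [div_eq_mul_inv, ← inv_pow]
      ring
    have h3 : (fun y : ℝ => (1 - a * y ^ n)⁻¹) = F := (funext hF).symm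
    rw [h3, ← hF x] at h2
    exact h2
  -- formula for Ktil
  have hKtileq : ∀ i j, ∀ᶠ x in 𝓝[>] (0:ℝ), Ktil x i j =
      -(μ * x ^ (n - 1)) * (F x ^ 2 * H x i j) - F x * deriv (fun t => H t i j) x := by
    intro i j
    filter_upwards [hFder, hden_ne, (key i j).2.2] with x hFd hne hdH
    have hFne : F x ≠ 0 := by rw [hF x]; exact inv_ne_zero hne
    have hprod : HasDerivAt (fun t => F t ^ 2 * H t i j)
        (((2:ℝ) * F x ^ (2 - 1) * ((a * n * x ^ (n - 1)) * F x ^ 2)) * H x i j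
          + F x ^ 2 * deriv (fun t => H t i j) x) x := by
      have := (hFd.fun_pow 2).fun_mul hdH.hasDerivAt
      simpa using this
    rw [hKtil x i j, hprod.deriv, ha]
    field_simp
    ring
  -- Claim 2
  have claim2 : ∀ i j, (fun x : ℝ => Ktil x i j -
      (Khat x i j - μ * (if i = j then (1 : ℝ) else 0) * x ^ (n - 1)))
      =O[𝓝[>] (0 : ℝ)] fun x => x ^ n := by
    intro i j
    have hid : ∀ᶠ x in 𝓝[>] (0:ℝ),
        -(μ * x ^ (n - 1)) * (F x ^ 2 * H x i j
            - (1 : Matrix (Fin (n - 1)) (Fin (n - 1)) ℝ) i j)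
          + (1 - F x) * deriv (fun t => H t i j) x
        = Ktil x i j - (Khat x i j - μ * (if i = j then (1:ℝ) else 0) * x ^ (n - 1)) := by
      filter_upwards [hKtileq i j] with x hx
      rw [hx, hKhat x i j, Matrix.one_apply]
      ring
    have hO1 : (fun x => -(μ * x ^ (n - 1)) * (F x ^ 2 * H x i j
        - (1 : Matrix (Fin (n - 1)) (Fin (n - 1)) ℝ) i j)) =O[𝓝[>] (0:ℝ)] fun x => x ^ n := by
      have h1 : (fun x : ℝ => -(μ * x ^ (n - 1))) =O[𝓝[>] (0:ℝ)] fun x => x ^ (n - 1) :=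
        ((isBigO_refl _ _).const_mul_left μ).neg_left
      refine (h1.mul (hAsub i j)).trans ?_
      have he : (fun x : ℝ => x ^ (n - 1) * x ^ n) = fun x => x ^ (n - 1 + n) := by
        funext x; rw [pow_add]
      rw [he]; exact aux_pow_le (by omega)
    have hO2 : (fun x => (1 - F x) * deriv (fun t => H t i j) x)
        =O[𝓝[>] (0:ℝ)] fun x => x ^ n := by
      have h1 : (fun x => 1 - F x) =O[𝓝[>] (0:ℝ)] fun x => x ^ n :=
        hFsub.neg_left.congr_left fun x => by ring
      refine (h1.mul (hderivO i j)).trans ?_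
      have he : (fun x : ℝ => x ^ n * x ^ (n - 1)) = fun x => x ^ (n + (n - 1)) := by
        funext x; rw [pow_add]
      rw [he]; exact aux_pow_le (by omega)
    exact (hO1.add hO2).congr' hid EventuallyEq.rfl
  -- Claim 3
  have claim3 : ∀ i j, (fun x : ℝ => Ktil x i j +
      (κ i j + μ * (if i = j then (1 : ℝ) else 0)) * x ^ (n - 1))
      =O[𝓝[>] (0 : ℝ)] fun x => x ^ n := by
    intro i j
    exact ((claim2 i j).add (claim1 i j)).congr_left fun x => by ring
  refine ⟨claim1, claim2, claim3, ?_⟩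
  -- Claim 4
  have hKtilO : ∀ i j, (fun x => Ktil x i j) =O[𝓝[>] (0:ℝ)] fun x => x ^ (n - 1) := by
    intro i j
    have h1 := (claim3 i j).trans (aux_pow_le (by omega : n - 1 ≤ n))
    have h2 : (fun x : ℝ => (κ i j + μ * (if i = j then (1:ℝ) else 0)) * x ^ (n - 1))
        =O[𝓝[>] (0:ℝ)] fun x => x ^ (n - 1) := (isBigO_refl _ _).const_mul_left _
    exact (h1.sub h2).congr_left fun x => by ring
  set A : ℝ → Matrix (Fin (n - 1)) (Fin (n - 1)) ℝ := fun x => (F x ^ 2) • H x with hA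
  have hAapp : ∀ x i j, A x i j = F x ^ 2 * H x i j := fun x i j => rfl
  have hAsub' : ∀ i j, (fun x => A x i j - (1 : Matrix (Fin (n - 1)) (Fin (n - 1)) ℝ) i j)
      =O[𝓝[>] (0:ℝ)] fun x => x ^ n := fun i j =>
    (hAsub i j).congr_left fun x => by rw [hAapp]
  have hxn0 : Tendsto (fun x : ℝ => x ^ n) (𝓝[>] (0:ℝ)) (𝓝 0) := by
    have h0 : Tendsto (fun x : ℝ => x ^ n) (𝓝[>] (0:ℝ)) (𝓝 ((0:ℝ) ^ n)) :=
      ((continuous_pow n).tendsto (0:ℝ)).mono_left nhdsWithin_le_nhds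
    simpa [zero_pow (by omega : n ≠ 0)] using h0
  have htendA : Tendsto A (𝓝[>] (0:ℝ)) (𝓝 1) := by
    refine tendsto_pi_nhds.2 ?_
    intro i
    refine tendsto_pi_nhds.2 ?_
    intro j
    have h0 := ((hAsub' i j).trans_tendsto hxn0).add
      (tendsto_const_nhds (x := (1 : Matrix (Fin (n - 1)) (Fin (n - 1)) ℝ) i j))
    simpa using h0
  have hdetA : Tendsto (fun x => (A x).det) (𝓝[>] (0:ℝ)) (𝓝 1) := by
    have hc : Continuous fun M : Matrix (Fin (n - 1)) (Fin (n - 1)) ℝ => M.det :=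
      continuous_id.matrix_det
    have := (hc.tendsto (1 : Matrix (Fin (n - 1)) (Fin (n - 1)) ℝ)).comp htendA
    simpa [Function.comp_def] using this
  have hinvA : Tendsto (fun x => (A x)⁻¹) (𝓝[>] (0:ℝ)) (𝓝 1) := by
    have hC : ContinuousAt Inv.inv (1 : Matrix (Fin (n - 1)) (Fin (n - 1)) ℝ) := by
      apply continuousAt_matrix_inv
      rw [Matrix.det_one, Ring.inverse_eq_inv']
      exact continuousAt_inv₀ one_ne_zero
    have := hC.tendsto.comp htendA
    simpa [inv_one, Function.comp_def] using this
  have hAinvO : ∀ i j, (fun x => (A x)⁻¹ i j) =O[𝓝[>] (0:ℝ)] fun _ => (1:ℝ) := by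
    intro i j
    have hc : Continuous fun M : Matrix (Fin (n - 1)) (Fin (n - 1)) ℝ => M i j :=
      continuous_id.matrix_elem i j
    exact ((hc.tendsto _).comp hinvA).isBigO_one ℝ
  have hUnit : ∀ᶠ x in 𝓝[>] (0:ℝ), IsUnit (A x).det :=
    (hdetA.eventually_ne one_ne_zero).mono fun x hx => isUnit_iff_ne_zero.mpr hx
  have hidtr : ∀ᶠ x in 𝓝[>] (0:ℝ),
      Matrix.trace ((A x)⁻¹ * ((1 - A x) * Ktil x))
        + (Matrix.trace (Ktil x) + (n:ℝ) * μ * x ^ (n - 1))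
      = Matrix.trace ((A x)⁻¹ * Ktil x) + (n:ℝ) * μ * x ^ (n - 1) := by
    filter_upwards [hUnit] with x hx
    have hinv : (A x)⁻¹ * A x = 1 := Matrix.nonsing_inv_mul _ hx
    have hm : (A x)⁻¹ * ((1 - A x) * Ktil x) = (A x)⁻¹ * Ktil x - Ktil x := by
      rw [← mul_assoc, mul_sub, mul_one, hinv, sub_mul, one_mul]
    rw [hm, Matrix.trace_sub]
    ring
  have htr1 : (fun x => Matrix.trace ((A x)⁻¹ * ((1 - A x) * Ktil x)))
      =O[𝓝[>] (0:ℝ)] fun x => x ^ n := by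
    have hterm : ∀ i j k, (fun x => (A x)⁻¹ i j * ((1 - A x) j k * Ktil x k i))
        =O[𝓝[>] (0:ℝ)] fun x => x ^ n := by
      intro i j k
      have h2 : (fun x => (1 - A x) j k) =O[𝓝[>] (0:ℝ)] fun x => x ^ n := by
        refine (hAsub' j k).neg_left.congr_left fun x => ?_
        simp [Matrix.sub_apply]
      refine ((hAinvO i j).mul (h2.mul (hKtilO k i))).trans ?_
      have he : (fun x : ℝ => (1:ℝ) * (x ^ n * x ^ (n - 1))) = fun x => x ^ (n + (n - 1)) := by
        funext x; rw [one_mul, pow_add]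
      rw [he]; exact aux_pow_le (by omega)
    have hsum := Asymptotics.IsBigO.sum (s := (Finset.univ : Finset (Fin (n - 1))))
      (fun i _ => Asymptotics.IsBigO.sum (s := (Finset.univ : Finset (Fin (n - 1))))
        (fun j _ => Asymptotics.IsBigO.sum (s := (Finset.univ : Finset (Fin (n - 1))))
          (fun k _ => hterm i j k) (g := fun x : ℝ => x ^ n))
        (g := fun x : ℝ => x ^ n)) (g := fun x : ℝ => x ^ n)
    refine hsum.congr_left fun x => ?_
    rw [Matrix.trace]
    simp only [Finset.sum_apply, Matrix.diag_apply, Matrix.mul_apply, Finset.mul_sum]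
  have htr2 : (fun x => Matrix.trace (Ktil x) + (n:ℝ) * μ * x ^ (n - 1))
      =O[𝓝[>] (0:ℝ)] fun x => x ^ n := by
    have hsum := Asymptotics.IsBigO.sum (s := (Finset.univ : Finset (Fin (n - 1))))
      (fun i _ => claim3 i i) (g := fun x : ℝ => x ^ n)
    refine hsum.congr_left fun x => ?_
    simp only [Finset.sum_apply, if_pos rfl, if_true, mul_one]
    rw [Finset.sum_add_distrib, ← Finset.sum_mul, Finset.sum_add_distrib, Finset.sum_const,
      Finset.card_univ, Fintype.card_fin]
    have h1 : ∑ i, Ktil x i i = Matrix.trace (Ktil x) := by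
      rw [Matrix.trace]; simp [Matrix.diag_apply]
    have h2 : ∑ i : Fin (n - 1), κ i i = μ := by
      rw [hμ, Matrix.trace]; simp [Matrix.diag_apply]
    rw [h1, h2, nsmul_eq_mul, Nat.cast_sub hn1]
    push_cast
    ring
  exact ((htr1.add htr2).congr' hidtr EventuallyEq.rfl)
end
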